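/- Let a, b, d, e ∈ ℂ with Re(d+e−a−b−1) > 0 and Re(a−e+1) > 0, and assume none of d, e, b, d−a, b−e+1 is a nonpositive integer. For n ∈ ℕ define S(n) := [(b)_n (d−a)_n / ((d)_n (b−e+1)_n)] · ∑_{k=0}^∞ (a)_k (b+n)_k (1)_k / ((d+n)_k (e)_k · k!). Then for every n ∈ ℕ the defining series converges absolutely and S(n+1) − S(n) = −(e−1)(d−a)_n (b)_n / ((e−b−1)(d)_n (b−e+2)_n). -/

import Mathlib

/-!
Write `β = b + n`, `δ = d + n` and `U k = (a)_k (β)_k / ((δ)_k (e)_k)` for the `k`-th term of the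
series (the factors `(1)_k` and `k!` cancel). The prefactors of `S(n+1)` and `S(n)` differ by
`β (δ - a) / (δ (β - e + 1))`, so the claim is the contiguous relation
`β (δ - a) ∑ U' - (β - e + 1) δ ∑ U = (e - 1) δ`, where `U'` has `β, δ` shifted by one.
Termwise the left side telescopes, to `v k - v (k + 1)` with `v k = δ (e - 1 + k) U k`, and
`v k → 0`: by Euler's limit `GammaSeq → Γ`, `U (k + 1) = O(k ^ Re(a + β - δ - e))`, and
`Re(δ + e - a - β) > 1`. The same bound gives absolute convergence.
-/

open Complex

/-- Pochhammer symbol `(a)_k = a (a+1) ⋯ (a+k-1)`. -/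
noncomputable def poch (a : ℂ) (k : ℕ) : ℂ := ∏ i ∈ Finset.range k, (a + i)

/-- The normalized sum `S(n)` of Section 5. -/
noncomputable def S5 (a b d e : ℂ) (n : ℕ) : ℂ :=
  poch b n * poch (d - a) n / (poch d n * poch (b - e + 1) n) *
    ∑' k : ℕ, poch a k * poch (b + n) k * poch 1 k /
      (poch (d + n) k * poch e k * (Nat.factorial k : ℂ))

open Filter Topology Asymptotics

@[simp]
lemma poch_zero (x : ℂ) : poch x 0 = 1 := Finset.prod_range_zero _

lemma poch_succ (x : ℂ) (k : ℕ) : poch x (k + 1) = poch x k * (x + k) :=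
  Finset.prod_range_succ _ _

lemma poch_one (k : ℕ) : poch 1 k = k.factorial := by
  induction k with
  | zero => simp
  | succ k ih => rw [poch_succ, ih, Nat.factorial_succ]; push_cast; ring

lemma poch_add_one_mul (x : ℂ) (k : ℕ) : poch (x + 1) k * x = poch x k * (x + k) := by
  induction k with
  | zero => simp
  | succ k ih => rw [poch_succ, poch_succ]; push_cast; linear_combination (x + 1 + k) * ih

section NonposInt

variable {x : ℂ} (hx : ∀ m : ℕ, x ≠ -m)
include hx

lemma add_natCast_ne_zero (k : ℕ) : x + k ≠ 0 := fun h ↦ hx k (eq_neg_of_add_eq_zero_left h)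

lemma add_natCast_ne_neg_natCast (n : ℕ) : ∀ m : ℕ, x + n ≠ -m := fun m h ↦
  hx (m + n) (by push_cast; linear_combination h)

lemma poch_ne_zero (k : ℕ) : poch x k ≠ 0 :=
  Finset.prod_ne_zero_iff.2 fun i _ ↦ add_natCast_ne_zero hx i

lemma gammaSeq_ne_zero {n : ℕ} (hn : n ≠ 0) : GammaSeq x n ≠ 0 :=
  div_ne_zero (mul_ne_zero (by simp [cpow_eq_zero_iff, hn]) (mod_cast n.factorial_ne_zero))
    (poch_ne_zero hx (n + 1))

lemma poch_succ_eq_div_gammaSeq {n : ℕ} (hn : n ≠ 0) :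
    poch x (n + 1) = n ^ x * n.factorial / GammaSeq x n := by
  rw [eq_div_iff (gammaSeq_ne_zero hx hn), GammaSeq]
  exact mul_div_cancel₀ _ (poch_ne_zero hx _)

end NonposInt

noncomputable def pochQuot (a b c d : ℂ) (k : ℕ) : ℂ :=
  poch a k * poch b k / (poch c k * poch d k)

lemma pochQuot_succ (a b c d : ℂ) (k : ℕ) :
    pochQuot a b c d (k + 1) =
      pochQuot a b c d k * ((a + k) * (b + k) / ((c + k) * (d + k))) := by
  simp only [pochQuot, poch_succ, div_mul_div_comm]
  ring_nf

section Asymptotics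

variable {a b c d : ℂ} (hb : ∀ m : ℕ, b ≠ -m) (hc : ∀ m : ℕ, c ≠ -m) (hd : ∀ m : ℕ, d ≠ -m)
include hb hc hd

lemma pochQuot_succ_eq_cpow_mul (ha : ∀ m : ℕ, a ≠ -m) {n : ℕ} (hn : n ≠ 0) :
    pochQuot a b c d (n + 1) =
      n ^ (a + b - c - d) * (GammaSeq c n * GammaSeq d n / (GammaSeq a n * GammaSeq b n)) := by
  have hn' : (n : ℂ) ≠ 0 := Nat.cast_ne_zero.2 hn
  have hpow : ∀ s : ℂ, (n : ℂ) ^ s ≠ 0 := fun s ↦ by simp [cpow_eq_zero_iff, hn]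
  have hfac : (n.factorial : ℂ) ≠ 0 := Nat.cast_ne_zero.2 n.factorial_ne_zero
  rw [pochQuot, poch_succ_eq_div_gammaSeq ha hn, poch_succ_eq_div_gammaSeq hb hn,
    poch_succ_eq_div_gammaSeq hc hn, poch_succ_eq_div_gammaSeq hd hn,
    cpow_sub _ _ hn', cpow_sub _ _ hn', cpow_add _ _ hn']
  field_simp [gammaSeq_ne_zero ha hn, gammaSeq_ne_zero hb hn, gammaSeq_ne_zero hc hn,
    gammaSeq_ne_zero hd hn, hpow a, hpow b, hpow c, hpow d]

/-- The `GammaSeq` ratio of `pochQuot_succ_eq_cpow_mul` converges (Euler's limit formula), hence is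
bounded; if `a` is a nonpositive integer, the terms vanish eventually. -/
lemma isBigO_pochQuot_succ :
    (fun n : ℕ ↦ pochQuot a b c d (n + 1)) =O[atTop] fun n : ℕ ↦ (n : ℝ) ^ (a + b - c - d).re := by
  by_cases ha : ∀ m : ℕ, a ≠ -m
  · have hΓ : Gamma a * Gamma b ≠ 0 := mul_ne_zero (Gamma_ne_zero ha) (Gamma_ne_zero hb)
    have hlim := ((GammaSeq_tendsto_Gamma c).mul (GammaSeq_tendsto_Gamma d)).div
      ((GammaSeq_tendsto_Gamma a).mul (GammaSeq_tendsto_Gamma b)) hΓ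
    have hpow : (fun n : ℕ ↦ (n : ℂ) ^ (a + b - c - d)) =O[atTop]
        fun n : ℕ ↦ (n : ℝ) ^ (a + b - c - d).re := by
      refine .of_bound' ?_
      filter_upwards [eventually_gt_atTop 0] with n hn
      rw [norm_natCast_cpow_of_pos hn, Real.norm_of_nonneg (by positivity)]
    refine (hpow.mul (hlim.isBigO_one ℝ)).congr' ?_ (.of_forall fun _ ↦ mul_one _)
    filter_upwards [eventually_ne_atTop 0] with n hn
    exact (pochQuot_succ_eq_cpow_mul hb hc hd ha hn).symm
  · push Not at ha
    obtain ⟨m, rfl⟩ := ha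
    refine (isBigO_zero _ _).congr' ?_ EventuallyEq.rfl
    filter_upwards [eventually_ge_atTop m] with n hn
    have : poch (-m) (n + 1) = 0 :=
      Finset.prod_eq_zero (Finset.mem_range.2 (Nat.lt_succ_of_le hn)) (by ring)
    simp [pochQuot, this]

lemma summable_norm_pochQuot (hre : 1 < (c + d - a - b).re) :
    Summable fun k ↦ ‖pochQuot a b c d k‖ := by
  have hs : (a + b - c - d).re < -1 := by simp only [add_re, sub_re] at hre ⊢; linarith
  exact (summable_nat_add_iff 1).1 <|
    summable_of_isBigO_nat (Real.summable_nat_rpow.2 hs) (isBigO_pochQuot_succ hb hc hd).norm_left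

lemma tendsto_mul_pochQuot (hre : 1 < (c + d - a - b).re) (x : ℂ) :
    Tendsto (fun k : ℕ ↦ (x + k) * pochQuot a b c d k) atTop (𝓝 0) := by
  set s := (a + b - c - d).re
  have hs : s + 1 < 0 := by simp only [s, add_re, sub_re] at hre ⊢; linarith
  have hlin : (fun n : ℕ ↦ x + ↑(n + 1)) =O[atTop] fun n : ℕ ↦ (n : ℝ) := by
    refine .of_bound (‖x‖ + 2) ?_
    filter_upwards [eventually_ge_atTop 1] with n hn
    have h1 : (1 : ℝ) ≤ n := by exact_mod_cast hn
    calc ‖x + ↑(n + 1)‖ ≤ ‖x‖ + (n + 1) := by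
          refine (norm_add_le _ _).trans_eq ?_
          rw [← Nat.cast_succ, Complex.norm_natCast]
      _ ≤ (‖x‖ + 2) * ‖(n : ℝ)‖ := by
          rw [Real.norm_natCast]; nlinarith [norm_nonneg x]
  have hrpow : Tendsto (fun n : ℕ ↦ (n : ℝ) * (n : ℝ) ^ s) atTop (𝓝 0) := by
    have h := (tendsto_rpow_neg_atTop (neg_pos.2 hs)).comp tendsto_natCast_atTop_atTop
    rw [neg_neg] at h
    refine h.congr' ?_
    filter_upwards [eventually_ne_atTop 0] with n hn
    simp [Real.rpow_add_one (Nat.cast_ne_zero.2 hn), mul_comm]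
  rw [← tendsto_add_atTop_iff_nat 1]
  exact (hlin.mul (isBigO_pochQuot_succ hb hc hd)).trans_tendsto hrpow

end Asymptotics

lemma tsum_sub_succ_eq {G : Type*} [AddCommGroup G] [TopologicalSpace G] [IsTopologicalAddGroup G]
    [T2Space G] {v : ℕ → G} (hs : Summable fun k ↦ v k - v (k + 1))
    (hv : Tendsto v atTop (𝓝 0)) : ∑' k, (v k - v (k + 1)) = v 0 := by
  refine (hs.hasSum_iff_tendsto_nat.2 ?_).tsum_eq
  simp_rw [Finset.sum_range_sub']
  simpa using tendsto_const_nhds.sub hv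

lemma pochQuot_add_one_add_one_mul (a : ℂ) {b c d : ℂ} (hc : ∀ m : ℕ, c ≠ -m)
    (hd : ∀ m : ℕ, d ≠ -m) (k : ℕ) :
    pochQuot a (b + 1) (c + 1) d k * (b * (c + k)) = pochQuot a b c d k * ((b + k) * c) := by
  have hc1 : poch (c + 1) k ≠ 0 := by
    simpa using poch_ne_zero (add_natCast_ne_neg_natCast hc 1) k
  rw [pochQuot, pochQuot, div_mul_eq_mul_div, div_mul_eq_mul_div,
    div_eq_div_iff (mul_ne_zero hc1 (poch_ne_zero hd k))
      (mul_ne_zero (poch_ne_zero hc k) (poch_ne_zero hd k))]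
  linear_combination (poch a k * poch d k) *
    ((c + k) * poch c k * poch_add_one_mul b k - poch b k * (b + k) * poch_add_one_mul c k)

lemma pochQuot_contiguous (a : ℂ) {b c d : ℂ} (hc : ∀ m : ℕ, c ≠ -m) (hd : ∀ m : ℕ, d ≠ -m)
    (k : ℕ) :
    b * (c - a) * pochQuot a (b + 1) (c + 1) d k - (b - d + 1) * c * pochQuot a b c d k =
      c * (d - 1 + k) * pochQuot a b c d k -
        c * (d - 1 + ↑(k + 1)) * pochQuot a b c d (k + 1) := by
  have hck := add_natCast_ne_zero hc k
  have hshift := pochQuot_add_one_add_one_mul a hc hd (b := b) k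
  have hsucc : (d + k) * pochQuot a b c d (k + 1) * (c + k) =
      pochQuot a b c d k * ((a + k) * (b + k)) := by
    rw [pochQuot_succ]
    field_simp [add_natCast_ne_zero hd k]
  refine mul_right_cancel₀ hck ?_
  push_cast
  linear_combination (c - a) * hshift + c * hsucc

lemma tsum_pochQuot_contiguous {a b c d : ℂ} (hb : ∀ m : ℕ, b ≠ -m) (hc : ∀ m : ℕ, c ≠ -m)
    (hd : ∀ m : ℕ, d ≠ -m) (hre : 1 < (c + d - a - b).re) :
    b * (c - a) * ∑' k, pochQuot a (b + 1) (c + 1) d k -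
        (b - d + 1) * c * ∑' k, pochQuot a b c d k = (d - 1) * c := by
  set v : ℕ → ℂ := fun k ↦ c * (d - 1 + k) * pochQuot a b c d k
  have hb1 : ∀ m : ℕ, b + 1 ≠ -m := by simpa using add_natCast_ne_neg_natCast hb 1
  have hc1 : ∀ m : ℕ, c + 1 ≠ -m := by simpa using add_natCast_ne_neg_natCast hc 1
  have hre1 : 1 < (c + 1 + d - a - (b + 1)).re := by ring_nf at hre ⊢; exact hre
  have hU := (summable_norm_pochQuot hb hc hd hre).of_norm.mul_left ((b - d + 1) * c)
  have hU' := (summable_norm_pochQuot hb1 hc1 hd hre1).of_norm.mul_left (b * (c - a))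
  have hv : Tendsto v atTop (𝓝 0) := by
    simpa [v, mul_assoc] using (tendsto_mul_pochQuot hb hc hd hre (d - 1)).const_mul c
  have hterm : ∀ k, b * (c - a) * pochQuot a (b + 1) (c + 1) d k -
      (b - d + 1) * c * pochQuot a b c d k = v k - v (k + 1) :=
    pochQuot_contiguous a hc hd
  rw [← tsum_mul_left, ← tsum_mul_left, ← hU'.tsum_sub hU, tsum_congr hterm,
    tsum_sub_succ_eq ((hU'.sub hU).congr hterm) hv]
  simp [v, pochQuot]
  ring

lemma poch_mul_poch_mul_poch_one_div_eq_pochQuot (a b c d : ℂ) (k : ℕ) :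
    poch a k * poch b k * poch 1 k / (poch c k * poch d k * k.factorial) = pochQuot a b c d k := by
  rw [poch_one, pochQuot, mul_div_mul_right _ _ (Nat.cast_ne_zero.2 k.factorial_ne_zero)]

lemma S5_eq (a b d e : ℂ) (n : ℕ) :
    S5 a b d e n = poch b n * poch (d - a) n / (poch d n * poch (b - e + 1) n) *
      ∑' k, pochQuot a (b + n) (d + n) e k := by
  simp only [S5, poch_mul_poch_mul_poch_one_div_eq_pochQuot]

theorem section5_S_difference_general (a b d e : ℂ)
    (hre1 : 0 < (d + e - a - b - 1).re)
    (h : ∀ z ∈ [d, e, b, d - a, b - e + 1], ∀ m : ℕ, z ≠ -(m : ℂ)) :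
    ∀ n : ℕ,
      (Summable fun k : ℕ =>
        ‖poch a k * poch (b + n) k * poch 1 k /
          (poch (d + n) k * poch e k * (Nat.factorial k : ℂ))‖) ∧
      S5 a b d e (n + 1) - S5 a b d e n =
        -((e - 1) * poch (d - a) n * poch b n /
          ((e - b - 1) * poch d n * poch (b - e + 2) n)) := by
  intro n
  have hd := h d (by simp)
  have he := h e (by simp)
  have hb := h b (by simp)
  have hbe := h (b - e + 1) (by simp)
  have hre : 1 < (d + n + e - a - (b + n)).re := by
    simp only [add_re, sub_re, one_re] at hre1 ⊢; linarith
  have hβ := add_natCast_ne_neg_natCast hb n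
  have hδ := add_natCast_ne_neg_natCast hd n
  refine ⟨by simpa only [poch_mul_poch_mul_poch_one_div_eq_pochQuot] using
    summable_norm_pochQuot hβ hδ he hre, ?_⟩
  have key := tsum_pochQuot_contiguous hβ hδ he hre
  have hbe2 := poch_add_one_mul (b - e + 1) n
  rw [show b - e + 1 + 1 = b - e + 2 by ring] at hbe2
  rw [S5_eq, S5_eq, Nat.cast_succ, ← add_assoc, ← add_assoc]
  simp only [poch_succ]
  have hbe0 : e - b - 1 ≠ 0 := fun h0 ↦
    add_natCast_ne_zero hbe 0 (by push_cast; linear_combination -h0)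
  have hp2 : poch (b - e + 2) n ≠ 0 :=
    left_ne_zero_of_mul (hbe2 ▸ mul_ne_zero (poch_ne_zero hbe n) (add_natCast_ne_zero hbe n))
  field_simp [poch_ne_zero hd n, poch_ne_zero hbe n, add_natCast_ne_zero hd n,
    add_natCast_ne_zero hbe n, hbe0, hp2]
  linear_combination (poch b n * poch (d - a) n * (e - b - 1) * poch (b - e + 2) n) * key -
    (poch b n * poch (d - a) n * (e - 1) * (d + n)) * hbe2

theorem section5_S_difference (a b d e : ℂ)
    (hre1 : 0 < (d + e - a - b - 1).re) (hre2 : 0 < (a - e + 1).re)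
    (h : ∀ z ∈ [d, e, b, d - a, b - e + 1], ∀ m : ℕ, z ≠ -(m : ℂ)) :
    ∀ n : ℕ,
      (Summable fun k : ℕ =>
        ‖poch a k * poch (b + n) k * poch 1 k /
          (poch (d + n) k * poch e k * (Nat.factorial k : ℂ))‖) ∧
      S5 a b d e (n + 1) - S5 a b d e n =
        -((e - 1) * poch (d - a) n * poch b n /
          ((e - b - 1) * poch d n * poch (b - e + 2) n)) :=
  section5_S_difference_general a b d e hre1 h
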